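/- Under the replicability setup with the directional FWER replicability procedure at level α ∈ (0,1), for every feature j with H_j ∈ {(0,1),(0,−1)} such that P_{2j}^L is independent of the vector of primary-study p-values (P_{11}^L,…,P_{1m}^L), it holds that E(R_j^L + R_j^R) ≤ c₁(α)α/m + c₂α·E[ 1{j ∈ R₁}/|R₁| ]. -/

import Mathlib

open MeasureTheory ProbabilityTheory Set

/-!
A claim for `j` forces both studies' p-values to be small in a common direction:
`P₁ⱼᴸ ≤ a ∧ P₂ⱼᴸ ≤ b/|R₁|` or `P₁ⱼᴿ ≤ a ∧ P₂ⱼᴿ ≤ b/|R₁|`. Since `H₂ⱼ ≠ 0`, only one of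
`P₂ⱼᴸ`, `P₂ⱼᴿ` is super-uniform; keep the follow-up condition in that direction and the primary
one in the other. As `H₁ⱼ = 0`, the primary event has probability at most `a`, and as `P₂ⱼ` is
independent of `R₁`, conditioning on the primary study bounds the follow-up event by
`b·E[1{j ∈ R₁}/|R₁|]`.
-/

section Replicability

variable {Ω : Type} {m : ℕ}

/-- `c₁(x) = (1−c₂)/(1 − l₀₀(1 − c₂x))`. -/
noncomputable def c1 (l00 c2 x : ℝ) : ℝ := (1 - c2) / (1 - l00 * (1 - c2 * x))

/-- The primary-study one-sided p-value in the direction favoured by the primary study: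
`p'₁ⱼ = min(P₁ⱼᴸ, P₁ⱼᴿ)` where `P₁ⱼᴿ = 1 − P₁ⱼᴸ`. -/
noncomputable def p1' (P1L : Fin m → Ω → ℝ) (j : Fin m) (ω : Ω) : ℝ :=
  min (P1L j ω) (1 - P1L j ω)

/-- The follow-up study one-sided p-value in the direction favoured by the primary study:
`p'₂ⱼ = P₂ⱼᴸ` if `P₁ⱼᴸ < P₁ⱼᴿ` and `p'₂ⱼ = P₂ⱼᴿ = 1 − P₂ⱼᴸ` otherwise. -/
noncomputable def p2' (P1L P2L : Fin m → Ω → ℝ) (j : Fin m) (ω : Ω) : ℝ :=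
  if P1L j ω < 1 - P1L j ω then P2L j ω else 1 - P2L j ω

/-- The set `R₁` of features selected for follow-up, a function of the primary-study
left-sided p-values. -/
def R1set (sel : (Fin m → ℝ) → Finset (Fin m)) (P1L : Fin m → Ω → ℝ) (ω : Ω) :
    Finset (Fin m) := sel (fun i => P1L i ω)

/-- A replicability claim is made for feature `j` if `j` is selected, `p'₁ⱼ ≤ a`
and `p'₂ⱼ ≤ b/|R₁|`. -/
def Claim (sel : (Fin m → ℝ) → Finset (Fin m)) (P1L P2L : Fin m → Ω → ℝ)
    (a b : ℝ) (j : Fin m) (ω : Ω) : Prop :=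
  j ∈ R1set sel P1L ω ∧ p1' P1L j ω ≤ a ∧
    p2' P1L P2L j ω ≤ b / ((R1set sel P1L ω).card : ℝ)

open Classical in
/-- Indicator of a left-direction replicability claim for feature `j`. -/
noncomputable def RjL (sel : (Fin m → ℝ) → Finset (Fin m)) (P1L P2L : Fin m → Ω → ℝ)
    (a b : ℝ) (j : Fin m) (ω : Ω) : ℕ :=
  if Claim sel P1L P2L a b j ω ∧ P1L j ω < 1 - P1L j ω then 1 else 0

open Classical in
/-- Indicator of a right-direction replicability claim for feature `j`. -/
noncomputable def RjR (sel : (Fin m → ℝ) → Finset (Fin m)) (P1L P2L : Fin m → Ω → ℝ)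
    (a b : ℝ) (j : Fin m) (ω : Ω) : ℕ :=
  if Claim sel P1L P2L a b j ω ∧ ¬ (P1L j ω < 1 - P1L j ω) then 1 else 0

/-- `R`, the total number of replicability claims. -/
noncomputable def Rtot (sel : (Fin m → ℝ) → Finset (Fin m)) (P1L P2L : Fin m → Ω → ℝ)
    (a b : ℝ) (ω : Ω) : ℕ :=
  ∑ j : Fin m, (RjL sel P1L P2L a b j ω + RjR sel P1L P2L a b j ω)

/-- `S`, the number of true directional replicability claims. -/
noncomputable def Stot (H1 H2 : Fin m → ℤ) (sel : (Fin m → ℝ) → Finset (Fin m))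
    (P1L P2L : Fin m → Ω → ℝ) (a b : ℝ) (ω : Ω) : ℕ :=
  ∑ j ∈ Finset.univ.filter (fun j => H1 j = 1 ∧ H2 j = 1), RjR sel P1L P2L a b j ω +
  ∑ j ∈ Finset.univ.filter (fun j => H1 j = -1 ∧ H2 j = -1), RjL sel P1L P2L a b j ω

end Replicability

section SuperUniform

variable {Ω β : Type*} [MeasurableSpace Ω] [MeasurableSpace β] {μ : Measure Ω}

def IsSuperUniform (X : Ω → ℝ) (μ : Measure Ω) : Prop :=
  ∀ t ∈ Icc (0:ℝ) 1, μ {ω | X ω ≤ t} ≤ ENNReal.ofReal t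

variable [IsProbabilityMeasure μ]

theorem IsSuperUniform.measure_le {X : Ω → ℝ} (hX : IsSuperUniform X μ) (t : ℝ) :
    μ {ω | X ω ≤ t} ≤ ENNReal.ofReal t := by
  rcases lt_or_ge t 0 with ht | ht
  · calc μ {ω | X ω ≤ t} ≤ μ {ω | X ω ≤ 0} := measure_mono fun ω hω => le_trans hω ht.le
      _ ≤ ENNReal.ofReal 0 := hX 0 ⟨le_rfl, zero_le_one⟩
      _ = ENNReal.ofReal t := by rw [ENNReal.ofReal_zero, ENNReal.ofReal_of_nonpos ht.le]
  rcases le_or_gt t 1 with ht1 | ht1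
  · exact hX t ⟨ht, ht1⟩
  · calc μ {ω | X ω ≤ t} ≤ 1 := prob_le_one
      _ ≤ ENNReal.ofReal t := by rw [← ENNReal.ofReal_one]; exact ENNReal.ofReal_le_ofReal ht1.le

theorem isSuperUniform_one_sub {X : Ω → ℝ} (hX : Measurable X)
    (hunif : ∀ t ∈ Icc (0:ℝ) 1, μ {ω | X ω ≤ t} = ENNReal.ofReal t) :
    IsSuperUniform (fun ω => 1 - X ω) μ := by
  rintro t ⟨ht, -⟩
  rw [ENNReal.le_ofReal_iff_toReal_le (measure_ne_top _ _) ht, ← measureReal_def]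
  refine le_of_forall_pos_le_add fun ε hε => ?_
  rcases le_or_gt 1 (t + ε) with hle | hlt
  · exact measureReal_le_one.trans hle
  have hs : 1 - t - ε ∈ Icc (0:ℝ) 1 := ⟨by linarith, by linarith⟩
  have hsub : {ω | 1 - X ω ≤ t} ⊆ {ω | X ω ≤ 1 - t - ε}ᶜ :=
    fun ω (hω : 1 - X ω ≤ t) (hω' : X ω ≤ 1 - t - ε) => by linarith
  calc μ.real {ω | 1 - X ω ≤ t} ≤ μ.real {ω | X ω ≤ 1 - t - ε}ᶜ := measureReal_mono hsub
    _ = 1 - (1 - t - ε) := by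
      rw [probReal_compl_eq_one_sub (measurableSet_le hX measurable_const), measureReal_def,
        hunif _ hs, ENNReal.toReal_ofReal hs.1]
    _ = t + ε := by ring

/-- The law of `(Y, V)` is a product, so by Fubini `P(Y ≤ g(V)) = ∫ P(Y ≤ g(v)) dP_V(v)`,
and each inner probability is at most `g(v)`. -/
theorem IsSuperUniform.measure_le_lintegral_of_indepFun {Y : Ω → ℝ} {V : Ω → β} {g : β → ℝ}
    (hY : IsSuperUniform Y μ) (hYm : Measurable Y) (hV : Measurable V) (hg : Measurable g)
    (hind : IndepFun Y V μ) :
    μ {ω | Y ω ≤ g (V ω)} ≤ ∫⁻ ω, ENNReal.ofReal (g (V ω)) ∂μ := by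
  have hS : MeasurableSet {p : ℝ × β | p.1 ≤ g p.2} :=
    measurableSet_le measurable_fst (hg.comp measurable_snd)
  calc μ {ω | Y ω ≤ g (V ω)} = μ.map (fun ω => (Y ω, V ω)) {p | p.1 ≤ g p.2} :=
        (Measure.map_apply (hYm.prodMk hV) hS).symm
    _ = ((μ.map Y).prod (μ.map V)) {p | p.1 ≤ g p.2} := by
        rw [(indepFun_iff_map_prod_eq_prod_map_map hYm.aemeasurable hV.aemeasurable).1 hind]
    _ = ∫⁻ v, μ.map Y {y | y ≤ g v} ∂(μ.map V) := Measure.prod_apply_symm hS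
    _ ≤ ∫⁻ v, ENNReal.ofReal (g v) ∂(μ.map V) := lintegral_mono fun v =>
        (Measure.map_apply hYm measurableSet_Iic).trans_le (hY.measure_le _)
    _ = ∫⁻ ω, ENNReal.ofReal (g (V ω)) ∂μ :=
        lintegral_map (ENNReal.measurable_ofReal.comp hg) hV

theorem measureReal_le_add_integral_of_subset_union {C : Set Ω} {X Y : Ω → ℝ} {V : Ω → β}
    {g : β → ℝ} {a : ℝ} (ha : 0 ≤ a) (hV : Measurable V) (hg : Measurable g)
    (hg0 : ∀ v, 0 ≤ g v) (hgi : Integrable (fun ω => g (V ω)) μ) (hX : IsSuperUniform X μ)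
    (hY : IsSuperUniform Y μ) (hYm : Measurable Y) (hind : IndepFun Y V μ)
    (hC : C ⊆ {ω | X ω ≤ a} ∪ {ω | Y ω ≤ g (V ω)}) :
    μ.real C ≤ a + ∫ ω, g (V ω) ∂μ := by
  refine ENNReal.toReal_le_of_le_ofReal (add_nonneg ha (integral_nonneg fun ω => hg0 _)) ?_
  rw [ENNReal.ofReal_add ha (integral_nonneg fun ω => hg0 _),
    ofReal_integral_eq_lintegral_ofReal hgi (Filter.Eventually.of_forall fun ω => hg0 _)]
  calc μ C ≤ μ {ω | X ω ≤ a} + μ {ω | Y ω ≤ g (V ω)} :=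
        (measure_mono hC).trans (measure_union_le _ _)
    _ ≤ _ := add_le_add (hX.measure_le a) (hY.measure_le_lintegral_of_indepFun hYm hV hg hind)

end SuperUniform

section Replicability

variable {Ω : Type} {m : ℕ}

theorem c1_nonneg {l00 c2 x : ℝ} (hl00 : l00 ∈ Icc (0:ℝ) 1) (hc2 : c2 ≤ 1) (hx : 0 ≤ c2 * x) :
    0 ≤ c1 l00 c2 x := by
  have : l00 * (1 - c2 * x) ≤ 1 := by nlinarith [hl00.1, hl00.2]
  exact div_nonneg (by linarith) (by linarith)

/-- `p ↦ 1{j ∈ sel p}/|sel p|`, so that `1{j ∈ R₁}/|R₁|` is this function of the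
primary-study p-values. -/
noncomputable def selectionWeight (sel : (Fin m → ℝ) → Finset (Fin m)) (j : Fin m)
    (p : Fin m → ℝ) : ℝ :=
  {p | j ∈ sel p}.indicator (fun p => 1 / ((sel p).card : ℝ)) p

theorem selectionWeight_nonneg (sel : (Fin m → ℝ) → Finset (Fin m)) (j : Fin m)
    (p : Fin m → ℝ) : 0 ≤ selectionWeight sel j p :=
  indicator_nonneg (fun _ _ => by positivity) p

theorem selectionWeight_le_one (sel : (Fin m → ℝ) → Finset (Fin m)) (j : Fin m)
    (p : Fin m → ℝ) : selectionWeight sel j p ≤ 1 :=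
  indicator_apply_le' (fun _ => (one_div _).trans_le (Nat.cast_inv_le_one _)) fun _ => zero_le_one

theorem measurable_selectionWeight {sel : (Fin m → ℝ) → Finset (Fin m)}
    (hsel : @Measurable (Fin m → ℝ) (Finset (Fin m)) _ ⊤ sel) (j : Fin m) :
    Measurable (selectionWeight sel j) :=
  ((@measurable_from_top _ _ _ fun s : Finset (Fin m) => 1 / (s.card : ℝ)).comp hsel).indicator
    (hsel (MeasurableSpace.measurableSet_top (s := {s | j ∈ s})))

theorem Claim.left_or_right {sel : (Fin m → ℝ) → Finset (Fin m)} {P1L P2L : Fin m → Ω → ℝ}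
    {a b : ℝ} {j : Fin m} {ω : Ω} (h : Claim sel P1L P2L a b j ω) :
    (P1L j ω ≤ a ∧ P2L j ω ≤ b * selectionWeight sel j fun i => P1L i ω) ∨
      (1 - P1L j ω ≤ a ∧ 1 - P2L j ω ≤ b * selectionWeight sel j fun i => P1L i ω) := by
  obtain ⟨hmem, h1, h2⟩ := h
  have hw : b * selectionWeight sel j (fun i => P1L i ω) = b / (R1set sel P1L ω).card := by
    rw [selectionWeight, indicator_of_mem (show (fun i => P1L i ω) ∈ {p | j ∈ sel p} from hmem),
      mul_one_div]
    rfl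
  rw [hw]
  unfold p1' at h1
  unfold p2' at h2
  by_cases hd : P1L j ω < 1 - P1L j ω
  · rw [min_eq_left hd.le] at h1
    rw [if_pos hd] at h2
    exact Or.inl ⟨h1, h2⟩
  · rw [min_eq_right (not_lt.1 hd)] at h1
    rw [if_neg hd] at h2
    exact Or.inr ⟨h1, h2⟩

theorem RjL_add_RjR (sel : (Fin m → ℝ) → Finset (Fin m)) (P1L P2L : Fin m → Ω → ℝ)
    (a b : ℝ) (j : Fin m) (ω : Ω) :
    (RjL sel P1L P2L a b j ω : ℝ) + RjR sel P1L P2L a b j ω =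
      {ω | Claim sel P1L P2L a b j ω}.indicator 1 ω := by
  by_cases hc : Claim sel P1L P2L a b j ω <;> by_cases hd : P1L j ω < 1 - P1L j ω <;>
    simp [RjL, RjR, hc, hd]

variable [MeasurableSpace Ω]

theorem measurableSet_claim {sel : (Fin m → ℝ) → Finset (Fin m)}
    (hsel : @Measurable (Fin m → ℝ) (Finset (Fin m)) _ ⊤ sel) {P1L P2L : Fin m → Ω → ℝ}
    (hP1 : ∀ i, Measurable (P1L i)) (hP2 : ∀ i, Measurable (P2L i)) (a b : ℝ) (j : Fin m) :
    MeasurableSet {ω | Claim sel P1L P2L a b j ω} := by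
  have hR : @Measurable Ω (Finset (Fin m)) _ ⊤ (R1set sel P1L) :=
    hsel.comp (measurable_pi_lambda _ hP1)
  have hcard : Measurable fun ω => ((R1set sel P1L ω).card : ℝ) :=
    (@measurable_from_top _ _ _ fun s : Finset (Fin m) => (s.card : ℝ)).comp hR
  have hD : MeasurableSet {ω | P1L j ω < 1 - P1L j ω} :=
    measurableSet_lt (hP1 j) (measurable_const.sub (hP1 j))
  have hp1' : Measurable (p1' P1L j) := (hP1 j).min (measurable_const.sub (hP1 j))
  have hp2' : Measurable (p2' P1L P2L j) := (hP2 j).ite hD (measurable_const.sub (hP2 j))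
  exact (hR (MeasurableSpace.measurableSet_top (s := {s | j ∈ s}))).inter
    ((measurableSet_le hp1' measurable_const).inter
      (measurableSet_le hp2' (measurable_const.div hcard)))

end Replicability

theorem stmt11_general
    {Ω : Type} [MeasureSpace Ω] [IsProbabilityMeasure (ℙ : Measure Ω)]
    -- the number of features
    (m : ℕ)
    -- the hypothesis configuration H_j = (H1 j, H2 j) ∈ {-1,0,1}²
    (H1 H2 : Fin m → ℤ)
    -- the left-sided p-values of the two studies (the right-sided ones are 1 - P1L, 1 - P2L)
    (P1L P2L : Fin m → Ω → ℝ)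
    (measP1 : ∀ j, Measurable (P1L j)) (measP2 : ∀ j, Measurable (P2L j))
    -- null p-values are uniform
    (unif1 : ∀ j, H1 j = 0 → ∀ t ∈ Icc (0:ℝ) 1, ℙ {ω | P1L j ω ≤ t} = ENNReal.ofReal t)
    -- under a true right-sided (resp. left-sided) alternative, the left-sided (resp.
    -- right-sided) p-value is stochastically larger than or equal to uniform
    (stoch2R : ∀ j, H2 j = 1 → ∀ t ∈ Icc (0:ℝ) 1, ℙ {ω | P2L j ω ≤ t} ≤ ENNReal.ofReal t)
    (stoch2L : ∀ j, H2 j = -1 →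
      ∀ t ∈ Icc (0:ℝ) 1, ℙ {ω | 1 - P2L j ω ≤ t} ≤ ENNReal.ofReal t)
    -- the selection rule: a measurable, nonempty-set-valued function of the primary p-values
    (sel : (Fin m → ℝ) → Finset (Fin m))
    (selMeas : @Measurable (Fin m → ℝ) (Finset (Fin m)) _ ⊤ sel)
    -- the parameters l₀₀ ∈ [0,1) and c₂ ∈ (0,1)
    (l00 c2 : ℝ) (hl00 : l00 ∈ Ico (0:ℝ) 1) (hc2 : c2 ∈ Ioo (0:ℝ) 1)
    -- the level of the procedure
    (α : ℝ) (hα : α ∈ Ioo (0:ℝ) 1)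
    -- a feature with H_j ∈ {(0,1),(0,−1)} whose follow-up p-value is independent of the
    -- vector of primary-study p-values
    (j : Fin m) (hj : H1 j = 0 ∧ (H2 j = 1 ∨ H2 j = -1))
    (indep : IndepFun (P2L j) (fun ω => fun i => P1L i ω) ℙ) :
    ∫ ω, ((RjL sel P1L P2L (c1 l00 c2 α * α / (m : ℝ)) (c2 * α) j ω : ℝ) +
        (RjR sel P1L P2L (c1 l00 c2 α * α / (m : ℝ)) (c2 * α) j ω : ℝ)) ∂ℙ ≤
      c1 l00 c2 α * α / (m : ℝ) +
        c2 * α * ∫ ω, ({ω' | j ∈ R1set sel P1L ω'}.indicator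
          (fun ω' => 1 / ((R1set sel P1L ω').card : ℝ)) ω) ∂ℙ := by
  set a := c1 l00 c2 α * α / (m : ℝ)
  set b := c2 * α
  set V : Ω → (Fin m → ℝ) := fun ω i => P1L i ω
  set g : (Fin m → ℝ) → ℝ := fun p => b * selectionWeight sel j p
  have ha : 0 ≤ a := div_nonneg (mul_nonneg (c1_nonneg (Ico_subset_Icc_self hl00) hc2.2.le
    (mul_pos hc2.1 hα.1).le) hα.1.le) m.cast_nonneg
  have hb : 0 ≤ b := (mul_pos hc2.1 hα.1).le
  have hg0 : ∀ p, 0 ≤ g p := fun p => mul_nonneg hb (selectionWeight_nonneg _ _ _)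
  have hg : Measurable g := (measurable_selectionWeight selMeas j).const_mul b
  have hV : Measurable V := measurable_pi_lambda _ measP1
  have hgi : Integrable (fun ω => g (V ω)) ℙ :=
    .of_bound (hg.comp hV).aestronglyMeasurable b (Filter.Eventually.of_forall fun ω => by
      rw [Real.norm_of_nonneg (hg0 _)]
      exact mul_le_of_le_one_right hb (selectionWeight_le_one _ _ _))
  have bound := fun {C : Set Ω} {X Y : Ω → ℝ} =>
    measureReal_le_add_integral_of_subset_union (C := C) (X := X) (Y := Y) ha hV hg hg0 hgi
  simp_rw [RjL_add_RjR, integral_indicator_one (measurableSet_claim selMeas measP1 measP2 a b j)]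
  change _ ≤ a + b * ∫ ω, selectionWeight sel j (V ω) ∂ℙ
  rw [← integral_const_mul]
  rcases hj.2 with h2 | h2
  · exact bound (isSuperUniform_one_sub (measP1 j) (unif1 j hj.1)) (stoch2R j h2) (measP2 j)
      indep fun ω hω => (Claim.left_or_right hω).elim (fun h => .inr h.2) (fun h => .inl h.1)
  · exact bound (fun t ht => (unif1 j hj.1 t ht).le) (stoch2L j h2)
      (measurable_const.sub (measP2 j)) (indep.comp (measurable_const.sub measurable_id)
        measurable_id)
      fun ω hω => (Claim.left_or_right hω).elim (fun h => .inl h.1) (fun h => .inr h.2)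

/-- For a feature `j` with `H_j ∈ {(0,1),(0,−1)}` whose follow-up p-value is independent
of the primary-study p-values, the expected number of replicability claims of the
level-`α` directional FWER replicability procedure is at most
`c₁(α)α/m + c₂α·E[1{j ∈ R₁}/|R₁|]`. -/
theorem stmt11
    {Ω : Type} [MeasureSpace Ω] [IsProbabilityMeasure (ℙ : Measure Ω)]
    -- the number of features
    (m : ℕ) (hm : 1 ≤ m)
    -- the hypothesis configuration H_j = (H1 j, H2 j) ∈ {-1,0,1}²
    (H1 H2 : Fin m → ℤ)
    (hH1 : ∀ j, H1 j = -1 ∨ H1 j = 0 ∨ H1 j = 1)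
    (hH2 : ∀ j, H2 j = -1 ∨ H2 j = 0 ∨ H2 j = 1)
    -- the left-sided p-values of the two studies (the right-sided ones are 1 - P1L, 1 - P2L)
    (P1L P2L : Fin m → Ω → ℝ)
    (measP1 : ∀ j, Measurable (P1L j)) (measP2 : ∀ j, Measurable (P2L j))
    (range1 : ∀ j ω, P1L j ω ∈ Icc (0:ℝ) 1) (range2 : ∀ j ω, P2L j ω ∈ Icc (0:ℝ) 1)
    (neHalf : ∀ j, ∀ᵐ ω ∂ℙ, P1L j ω ≠ 1/2)
    -- null p-values are uniform
    (unif1 : ∀ j, H1 j = 0 → ∀ t ∈ Icc (0:ℝ) 1, ℙ {ω | P1L j ω ≤ t} = ENNReal.ofReal t)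
    (unif2 : ∀ j, H2 j = 0 → ∀ t ∈ Icc (0:ℝ) 1, ℙ {ω | P2L j ω ≤ t} = ENNReal.ofReal t)
    -- under a true right-sided (resp. left-sided) alternative, the left-sided (resp.
    -- right-sided) p-value is stochastically larger than or equal to uniform
    (stoch1R : ∀ j, H1 j = 1 → ∀ t ∈ Icc (0:ℝ) 1, ℙ {ω | P1L j ω ≤ t} ≤ ENNReal.ofReal t)
    (stoch2R : ∀ j, H2 j = 1 → ∀ t ∈ Icc (0:ℝ) 1, ℙ {ω | P2L j ω ≤ t} ≤ ENNReal.ofReal t)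
    (stoch1L : ∀ j, H1 j = -1 →
      ∀ t ∈ Icc (0:ℝ) 1, ℙ {ω | 1 - P1L j ω ≤ t} ≤ ENNReal.ofReal t)
    (stoch2L : ∀ j, H2 j = -1 →
      ∀ t ∈ Icc (0:ℝ) 1, ℙ {ω | 1 - P2L j ω ≤ t} ≤ ENNReal.ofReal t)
    -- the selection rule: a measurable, nonempty-set-valued function of the primary p-values
    (sel : (Fin m → ℝ) → Finset (Fin m))
    (selMeas : @Measurable (Fin m → ℝ) (Finset (Fin m)) _ ⊤ sel)
    (selNonempty : ∀ p, (sel p).Nonempty)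
    -- the parameters l₀₀ ∈ [0,1) and c₂ ∈ (0,1)
    (l00 c2 : ℝ) (hl00 : l00 ∈ Ico (0:ℝ) 1) (hc2 : c2 ∈ Ioo (0:ℝ) 1)
    -- the level of the procedure
    (α : ℝ) (hα : α ∈ Ioo (0:ℝ) 1)
    -- a feature with H_j ∈ {(0,1),(0,−1)} whose follow-up p-value is independent of the
    -- vector of primary-study p-values
    (j : Fin m) (hj : H1 j = 0 ∧ (H2 j = 1 ∨ H2 j = -1))
    (indep : IndepFun (P2L j) (fun ω => fun i => P1L i ω) ℙ) :
    ∫ ω, ((RjL sel P1L P2L (c1 l00 c2 α * α / (m : ℝ)) (c2 * α) j ω : ℝ) +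
        (RjR sel P1L P2L (c1 l00 c2 α * α / (m : ℝ)) (c2 * α) j ω : ℝ)) ∂ℙ ≤
      c1 l00 c2 α * α / (m : ℝ) +
        c2 * α * ∫ ω, ({ω' | j ∈ R1set sel P1L ω'}.indicator
          (fun ω' => 1 / ((R1set sel P1L ω').card : ℝ)) ω) ∂ℙ :=
  stmt11_general m H1 H2 P1L P2L measP1 measP2 unif1 stoch2R stoch2L sel selMeas l00 c2 hl00 hc2 α
    hα j hj indep
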